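/- arXiv:2107.07245 — 4 statements merged into one kernel-verified Lean document; each statement's English description precedes it below -/
import Mathlib

section
/- For complex q with |q| < 1, ∑_{n∈ℤ} q^{n²} = ∏_{n=1}^∞ (1 - q^{2n})(1 + q^{2n-1})². -/
/-!
Substitute `p = q²`, `x = q^(1 - 2N)` and `m = 2N` into the `q`-binomial theorem
`∏_{i<m} (1 + x pⁱ) = ∑_k e_k(1, p, …, p^(m-1)) xᵏ`, where
`e_k(1, p, …, p^(m-1)) (p;p)_{m-k} (p;p)_k = p^(k choose 2) (p;p)_m`. Pairing the factors
`1 + q^(±(2j+1))` then gives the finite identity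
`∏_{j<N} (1 - q^(2j+2)) (1 + q^(2j+1))² = ∑_{|n| ≤ N} c_N(n) q^(n²)` with
`c_N(n) = (q²;q²)_N (q²;q²)_{2N} / ((q²;q²)_{N-n} (q²;q²)_{N+n})`.
Since `(q²;q²)_k` converges to a nonzero limit, `c_N(n) → 1` for each `n` and the `c_N(n)` are
bounded uniformly, so Tannery's theorem (with dominant `C ‖q‖^|n|`) lets `N → ∞` in the sum.
-/

open Finset Filter Topology

namespace JacobiTripleProduct

section Algebra

variable {R : Type*}

/-- `geomEsymm p m k` is the `k`-th elementary symmetric polynomial of `1, p, …, p ^ (m - 1)`. -/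
def geomEsymm [CommSemiring R] (p : R) : ℕ → ℕ → R
  | _, 0 => 1
  | 0, _ + 1 => 0
  | m + 1, k + 1 => geomEsymm p m (k + 1) + p ^ m * geomEsymm p m k

section CommSemiring

variable [CommSemiring R] (p : R)

@[simp] lemma geomEsymm_zero_right (m : ℕ) : geomEsymm p m 0 = 1 := by cases m <;> rfl

lemma geomEsymm_eq_zero_of_lt : ∀ {m k : ℕ}, m < k → geomEsymm p m k = 0
  | 0, _ + 1, _ => rfl
  | m + 1, k + 1, h => by
    rw [geomEsymm, geomEsymm_eq_zero_of_lt (by omega), geomEsymm_eq_zero_of_lt (by omega),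
      mul_zero, add_zero]

lemma geomEsymm_self : ∀ m : ℕ, geomEsymm p m m = p ^ m.choose 2
  | 0 => by simp
  | m + 1 => by
    rw [geomEsymm, geomEsymm_eq_zero_of_lt p (Nat.lt_succ_self m), geomEsymm_self m, zero_add,
      ← pow_add, Nat.choose_succ_succ', Nat.choose_one_right]

theorem prod_one_add_mul_pow (x : R) (m : ℕ) :
    ∏ i ∈ range m, (1 + x * p ^ i) = ∑ k ∈ range (m + 1), geomEsymm p m k * x ^ k := by
  induction m with
  | zero => simp
  | succ m ih =>
    have hshift : ∑ k ∈ range (m + 1), geomEsymm p m (k + 1) * x ^ (k + 1) + 1 =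
        ∑ k ∈ range (m + 1), geomEsymm p m k * x ^ k := by
      rw [← pow_zero x, ← one_mul (x ^ 0), ← geomEsymm_zero_right p m,
        ← sum_range_succ' (fun k ↦ geomEsymm p m k * x ^ k), sum_range_succ,
        geomEsymm_eq_zero_of_lt p (Nat.lt_succ_self m), zero_mul, add_zero]
    rw [prod_range_succ, ih, sum_range_succ' _ (m + 1)]
    simp only [geomEsymm, add_mul, sum_add_distrib, pow_zero, mul_one]
    rw [add_right_comm, hshift, mul_add, mul_one, sum_mul]
    congr 1
    exact sum_congr rfl fun k _ ↦ by ring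

end CommSemiring

/-- `qPochhammer p k` is `(p; p)_k`. -/
def qPochhammer [CommRing R] (p : R) (k : ℕ) : R := ∏ j ∈ range k, (1 - p ^ (j + 1))

section CommRing

variable [CommRing R] (p : R)

@[simp] lemma qPochhammer_zero : qPochhammer p 0 = 1 := prod_range_zero _

lemma qPochhammer_succ (k : ℕ) : qPochhammer p (k + 1) = qPochhammer p k * (1 - p ^ (k + 1)) :=
  prod_range_succ _ _

theorem geomEsymm_mul_qPochhammer (a b : ℕ) :
    geomEsymm p (a + b) b * (qPochhammer p a * qPochhammer p b) =
      p ^ b.choose 2 * qPochhammer p (a + b) := by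
  induction a generalizing b with
  | zero => simp [geomEsymm_self, mul_comm]
  | succ a iha =>
    induction b with
    | zero => simp
    | succ b ihb =>
      have iha' := iha (b + 1)
      have hpow : p ^ (a + b + 1) * p ^ b.choose 2 = p ^ (b + 1).choose 2 * p ^ (a + 1) := by
        rw [← pow_add, ← pow_add, Nat.choose_succ_succ', Nat.choose_one_right]
        ring_nf
      rw [← add_assoc, qPochhammer_succ p b] at iha'
      rw [add_right_comm a 1 b, qPochhammer_succ p a] at ihb
      rw [show a + 1 + (b + 1) = a + b + 1 + 1 by ring, geomEsymm, qPochhammer_succ p a,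
        qPochhammer_succ p b, qPochhammer_succ p (a + b + 1)]
      linear_combination (1 - p ^ (a + 1)) * iha' + p ^ (a + b + 1) * (1 - p ^ (b + 1)) * ihb
        + qPochhammer p (a + b + 1) * (1 - p ^ (b + 1)) * hpow

end CommRing

end Algebra

lemma two_mul_choose_two (k : ℕ) : (2 * k.choose 2 : ℤ) = k * (k - 1) := by
  induction k with
  | zero => simp
  | succ k ih =>
    rw [Nat.choose_succ_succ', Nat.choose_one_right]
    push_cast
    linear_combination ih

lemma sum_Icc_neg_eq_sum_range {M : Type*} [AddCommMonoid M] (f : ℤ → M) (N : ℕ) :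
    ∑ n ∈ Icc (-N : ℤ) N, f n = ∑ k ∈ range (2 * N + 1), f (k - N) := by
  refine sum_nbij' (fun n ↦ (n + N).toNat) (fun k ↦ k - N) ?_ ?_ ?_ ?_ ?_ <;> intro x hx <;>
    simp only [mem_Icc, mem_range] at hx ⊢
  all_goals first | omega | congr; omega

section Field

variable {K : Type*} [Field K]

/-- For `|n| ≤ N`, `thetaCoeff p N n` is `(p;p)_N` times the Gaussian binomial `[2N, N + n]_p`. -/
def thetaCoeff (p : K) (N : ℕ) (n : ℤ) : K :=
  qPochhammer p N * qPochhammer p (2 * N) /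
    (qPochhammer p (N - n).toNat * qPochhammer p (N + n).toNat)

lemma thetaCoeff_sub_mul_pow_choose_two {p : K} (hp : ∀ k, qPochhammer p k ≠ 0) {N k : ℕ}
    (hk : k ≤ 2 * N) :
    thetaCoeff p N (k - N) * p ^ k.choose 2 = qPochhammer p N * geomEsymm p (2 * N) k := by
  have hclosed := geomEsymm_mul_qPochhammer p (2 * N - k) k
  rw [Nat.sub_add_cancel hk] at hclosed
  rw [thetaCoeff, show ((N : ℤ) - (k - N)).toNat = 2 * N - k by omega,
    show ((N : ℤ) + (k - N)).toNat = k by omega]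
  field_simp [hp]
  linear_combination -hclosed

variable {q : K}

lemma pow_sq_mul_prod_one_add_zpow (hq : q ≠ 0) (N : ℕ) :
    q ^ (N ^ 2) * ∏ i ∈ range (2 * N), (1 + q ^ ((2 * i + 1 : ℤ) - 2 * N)) =
      (∏ j ∈ range N, (1 + q ^ (2 * j + 1))) ^ 2 := by
  have hodd : ∏ j ∈ range N, q ^ (2 * j + 1) = q ^ (N ^ 2) := by
    induction N with
    | zero => simp
    | succ N ih =>
      rw [prod_range_succ, ih, ← pow_add]
      ring_nf
  have hlow : ∏ i ∈ range N, (1 + q ^ ((2 * i + 1 : ℤ) - 2 * N)) =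
      ∏ j ∈ range N, (1 + (q ^ (2 * j + 1))⁻¹) := by
    rw [← prod_range_reflect]
    refine prod_congr rfl fun j hj ↦ ?_
    rw [← zpow_natCast, ← zpow_neg]
    have hjN := mem_range.mp hj
    rw [Nat.sub_sub, Nat.cast_sub (by omega)]
    push_cast
    ring_nf
  have hhigh : ∏ j ∈ range N, (1 + q ^ ((2 * (N + j : ℕ) + 1 : ℤ) - 2 * N)) =
      ∏ j ∈ range N, (1 + q ^ (2 * j + 1)) := by
    refine prod_congr rfl fun j _ ↦ ?_
    rw [← zpow_natCast]
    push_cast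
    ring_nf
  rw [two_mul, prod_range_add, hlow, hhigh, ← hodd, ← mul_assoc, ← prod_mul_distrib, sq]
  congr 1
  refine prod_congr rfl fun j _ ↦ ?_
  field_simp [pow_ne_zero _ hq]
  ring

lemma prod_one_add_zpow_eq_sum_geomEsymm (hq : q ≠ 0) (N : ℕ) :
    ∏ i ∈ range (2 * N), (1 + q ^ ((2 * i + 1 : ℤ) - 2 * N)) =
      ∑ k ∈ range (2 * N + 1), geomEsymm (q ^ 2) (2 * N) k * (q ^ (1 - 2 * N : ℤ)) ^ k := by
  rw [← prod_one_add_mul_pow]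
  refine prod_congr rfl fun i _ ↦ ?_
  rw [← pow_mul, ← zpow_natCast, ← zpow_add₀ hq]
  push_cast
  ring_nf

lemma pow_sq_mul_pow_choose_two_mul_zpow (hq : q ≠ 0) (N k : ℕ) :
    q ^ (N ^ 2) * (q ^ 2) ^ k.choose 2 * (q ^ (1 - 2 * N : ℤ)) ^ k = q ^ (((k : ℤ) - N) ^ 2) := by
  simp only [← zpow_natCast, ← zpow_mul, ← zpow_add₀ hq]
  congr 1
  push_cast
  linear_combination two_mul_choose_two k

theorem qPochhammer_mul_prod_sq_eq_sum_thetaCoeff (hq : q ≠ 0)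
    (hP : ∀ k, qPochhammer (q ^ 2) k ≠ 0) (N : ℕ) :
    qPochhammer (q ^ 2) N * (∏ j ∈ range N, (1 + q ^ (2 * j + 1))) ^ 2 =
      ∑ n ∈ Icc (-N : ℤ) N, thetaCoeff (q ^ 2) N n * q ^ (n ^ 2) := by
  rw [← pow_sq_mul_prod_one_add_zpow hq, prod_one_add_zpow_eq_sum_geomEsymm hq,
    sum_Icc_neg_eq_sum_range, mul_sum, mul_sum]
  refine sum_congr rfl fun k hk ↦ ?_
  rw [← pow_sq_mul_pow_choose_two_mul_zpow hq N k, ← mul_assoc (thetaCoeff _ _ _),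
    ← mul_assoc (thetaCoeff _ _ _), mul_right_comm (thetaCoeff _ _ _),
    thetaCoeff_sub_mul_pow_choose_two hP (Nat.lt_succ_iff.mp (mem_range.mp hk))]
  ring

end Field

section Analysis

variable {𝕜 : Type*} [NormedField 𝕜] {p : 𝕜}

lemma norm_pow_lt_one (hp : ‖p‖ < 1) {k : ℕ} (hk : k ≠ 0) : ‖p ^ k‖ < 1 := by
  rw [norm_pow]
  exact pow_lt_one₀ (norm_nonneg p) hp hk

lemma summable_norm_pow_comp (hp : ‖p‖ < 1) {e : ℕ → ℕ} (he : Function.Injective e) :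
    Summable fun j ↦ ‖p ^ e j‖ := by
  simp only [norm_pow]
  exact (summable_geometric_of_lt_one (norm_nonneg p) hp).comp_injective he

lemma summable_pow_natAbs {r : ℝ} (hr₀ : 0 ≤ r) (hr : r < 1) :
    Summable fun n : ℤ ↦ r ^ n.natAbs :=
  .of_nat_of_neg (by simpa using summable_geometric_of_lt_one hr₀ hr)
    (by simpa using summable_geometric_of_lt_one hr₀ hr)

lemma norm_zpow_sq_le (hp : ‖p‖ ≤ 1) (n : ℤ) : ‖p ^ (n ^ 2)‖ ≤ ‖p‖ ^ n.natAbs := by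
  rw [← Int.natAbs_sq, ← Nat.cast_pow, zpow_natCast, norm_pow]
  exact pow_le_pow_of_le_one (norm_nonneg p) hp (Nat.le_self_pow two_ne_zero _)

lemma one_sub_pow_succ_ne_zero (hp : ‖p‖ < 1) (j : ℕ) : 1 - p ^ (j + 1) ≠ 0 :=
  sub_ne_zero.mpr fun h ↦ by simpa [← h] using norm_pow_lt_one hp j.succ_ne_zero

lemma qPochhammer_ne_zero (hp : ‖p‖ < 1) (k : ℕ) : qPochhammer p k ≠ 0 :=
  prod_ne_zero_iff.mpr fun j _ ↦ one_sub_pow_succ_ne_zero hp j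

variable [CompleteSpace 𝕜]

lemma multipliable_one_sub_pow_succ (hp : ‖p‖ < 1) : Multipliable fun j ↦ 1 - p ^ (j + 1) := by
  simpa only [← sub_eq_add_neg] using multipliable_one_add_of_summable (f := fun j ↦ -p ^ (j + 1))
    (by simpa only [norm_neg] using summable_norm_pow_comp hp (add_left_injective 1))

lemma tprod_one_sub_pow_succ_ne_zero (hp : ‖p‖ < 1) : ∏' j, (1 - p ^ (j + 1)) ≠ 0 := by
  simp only [sub_eq_add_neg]
  refine tprod_one_add_ne_zero_of_summable (fun j ↦ ?_) ?_
  · simpa only [← sub_eq_add_neg] using one_sub_pow_succ_ne_zero hp j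
  · simpa only [norm_neg] using summable_norm_pow_comp hp (add_left_injective 1)

lemma tendsto_qPochhammer (hp : ‖p‖ < 1) :
    Tendsto (qPochhammer p) atTop (𝓝 (∏' j, (1 - p ^ (j + 1)))) :=
  (multipliable_one_sub_pow_succ hp).hasProd.tendsto_prod_nat

lemma tendsto_thetaCoeff (hp : ‖p‖ < 1) (n : ℤ) :
    Tendsto (fun N ↦ thetaCoeff p N n) atTop (𝓝 1) := by
  have hL := tendsto_qPochhammer hp
  have hLL := mul_ne_zero (tprod_one_sub_pow_succ_ne_zero hp) (tprod_one_sub_pow_succ_ne_zero hp)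
  have htwo : Tendsto (fun N : ℕ ↦ 2 * N) atTop atTop :=
    tendsto_atTop_atTop.mpr fun b ↦ ⟨b, fun N hN ↦ by omega⟩
  have hsub : Tendsto (fun N : ℕ ↦ ((N : ℤ) - n).toNat) atTop atTop :=
    tendsto_atTop_atTop.mpr fun b ↦ ⟨b + n.natAbs, fun N hN ↦ by omega⟩
  have hadd : Tendsto (fun N : ℕ ↦ ((N : ℤ) + n).toNat) atTop atTop :=
    tendsto_atTop_atTop.mpr fun b ↦ ⟨b + n.natAbs, fun N hN ↦ by omega⟩
  rw [← div_self hLL]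
  exact (hL.mul (hL.comp htwo)).div ((hL.comp hsub).mul (hL.comp hadd)) hLL

lemma exists_norm_thetaCoeff_le (hp : ‖p‖ < 1) : ∃ C, ∀ N n, ‖thetaCoeff p N n‖ ≤ C := by
  obtain ⟨B, hB⟩ := isBounded_iff_forall_norm_le.mp
    (Metric.isBounded_range_of_tendsto _ (tendsto_qPochhammer hp))
  obtain ⟨D, hD⟩ := isBounded_iff_forall_norm_le.mp (Metric.isBounded_range_of_tendsto _
    ((tendsto_qPochhammer hp).inv₀ (tprod_one_sub_pow_succ_ne_zero hp)))
  simp only [Set.forall_mem_range] at hB hD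
  have hB0 : 0 ≤ B := (norm_nonneg _).trans (hB 0)
  have hD0 : 0 ≤ D := (norm_nonneg _).trans (hD 0)
  refine ⟨B * B * (D * D), fun N n ↦ ?_⟩
  rw [thetaCoeff, div_eq_mul_inv, mul_inv, norm_mul, norm_mul, norm_mul]
  gcongr <;> simp only [hB, hD]

theorem tendsto_sum_thetaCoeff_mul_zpow_sq {q : 𝕜} (hq : ‖q‖ < 1) :
    Tendsto (fun N : ℕ ↦ ∑ n ∈ Icc (-N : ℤ) N, thetaCoeff (q ^ 2) N n * q ^ (n ^ 2)) atTop
      (𝓝 (∑' n : ℤ, q ^ (n ^ 2))) := by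
  have hq2 := norm_pow_lt_one hq two_ne_zero
  obtain ⟨C, hC⟩ := exists_norm_thetaCoeff_le hq2
  set F : ℕ → ℤ → 𝕜 := fun N n ↦
    if n ∈ Icc (-N : ℤ) N then thetaCoeff (q ^ 2) N n * q ^ (n ^ 2) else 0
  have hF (N : ℕ) : ∑' n, F N n = ∑ n ∈ Icc (-N : ℤ) N, thetaCoeff (q ^ 2) N n * q ^ (n ^ 2) :=
    (tsum_eq_sum fun n hn ↦ if_neg hn).trans (sum_congr rfl fun n hn ↦ if_pos hn)
  have hlim (n : ℤ) : Tendsto (F · n) atTop (𝓝 (q ^ (n ^ 2))) := by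
    have := (tendsto_thetaCoeff hq2 n).mul_const (q ^ (n ^ 2))
    rw [one_mul] at this
    refine this.congr' ?_
    filter_upwards [eventually_ge_atTop n.natAbs] with N hN
    exact (if_pos (by rw [mem_Icc]; omega)).symm
  have hbound (N : ℕ) (n : ℤ) : ‖F N n‖ ≤ C * ‖q‖ ^ n.natAbs := by
    have hC0 : 0 ≤ C := (norm_nonneg _).trans (hC 0 0)
    simp only [F]
    split_ifs
    · rw [norm_mul]
      exact mul_le_mul (hC N n) (norm_zpow_sq_le hq.le n) (norm_nonneg _) hC0
    · rw [norm_zero]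
      positivity
  simpa only [hF] using tendsto_tsum_of_dominated_convergence
    ((summable_pow_natAbs (norm_nonneg q) hq).mul_left C) hlim (.of_forall hbound)

lemma multipliable_one_sub_pow_mul_one_add_pow_sq {q : 𝕜} (hq : ‖q‖ < 1) :
    Multipliable fun n : ℕ ↦ (1 - (q ^ 2) ^ (n + 1)) * (1 + q ^ (2 * n + 1)) ^ 2 := by
  have hodd : Multipliable fun n : ℕ ↦ 1 + q ^ (2 * n + 1) :=
    multipliable_one_add_of_summable (summable_norm_pow_comp hq fun a b h ↦ by omega)
  exact (multipliable_one_sub_pow_succ (norm_pow_lt_one hq two_ne_zero)).mul (hodd.pow 2)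

end Analysis

end JacobiTripleProduct

open JacobiTripleProduct Finset Filter in
theorem jacobi_triple_product_theta (q : ℂ) (hq : ‖q‖ < 1) :
    ∑' n : ℤ, q ^ (n ^ 2) =
      ∏' n : ℕ, (1 - q ^ (2 * (n + 1))) * (1 + q ^ (2 * (n + 1) - 1)) ^ 2 := by
  have hfactor (n : ℕ) : (1 - q ^ (2 * (n + 1))) * (1 + q ^ (2 * (n + 1) - 1)) ^ 2 =
      (1 - (q ^ 2) ^ (n + 1)) * (1 + q ^ (2 * n + 1)) ^ 2 := by
    rw [← pow_mul, show 2 * (n + 1) - 1 = 2 * n + 1 by omega]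
  simp only [hfactor]
  rcases eq_or_ne q 0 with rfl | hq0
  · rw [tsum_eq_single 0 fun n hn ↦ zero_zpow _ (pow_ne_zero 2 hn)]
    simp
  have hpartial (N : ℕ) : ∏ n ∈ range N, (1 - (q ^ 2) ^ (n + 1)) * (1 + q ^ (2 * n + 1)) ^ 2 =
      ∑ n ∈ Icc (-N : ℤ) N, thetaCoeff (q ^ 2) N n * q ^ (n ^ 2) := by
    rw [prod_mul_distrib, prod_pow]
    exact qPochhammer_mul_prod_sq_eq_sum_thetaCoeff hq0
      (qPochhammer_ne_zero (norm_pow_lt_one hq two_ne_zero)) N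
  refine tendsto_nhds_unique (tendsto_sum_thetaCoeff_mul_zpow_sq hq) ?_
  simpa only [hpartial] using
    (multipliable_one_sub_pow_mul_one_add_pow_sq hq).hasProd.tendsto_prod_nat
end

section
/- For every positive integer n, the number of representations of n as an ordered sum of two squares of integers equals 4·∑_{d∣n} χ(d), where χ is the nontrivial Dirichlet character mod 4. -/
/-- The nontrivial Dirichlet character mod 4, as a function on ℕ. -/
def chi4 (d : ℕ) : ℤ :=
  if d % 4 = 1 then 1 else if d % 4 = 3 then -1 else 0

/-!
Both `r(n)/4` and `∑_{d ∣ n} χ(d)` satisfy the Hecke recurrence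
`f(pm) = (1 + χ(p)) f(m) - χ(p) f(m/p)` (last term only when `p ∣ m`) at every prime `p`,
and such a recurrence determines `f` from `f(1)`.

For the divisor sum, the divisors of `pm` are those of `m` together with `p` times those of `m`,
and the two families overlap in `p` times the divisors of `m/p`.

For `r`, count Gaussian integers `z` of norm `pm`. If `p = 2`, then `1 + i ∣ z`, and `z ↦ z/(1+i)`
is a bijection onto the elements of norm `m`. If `p ≡ 3 (mod 4)`, `p` is a Gaussian prime,
so `p ∣ z` and `z/p` has norm `m/p`. If `p ≡ 1 (mod 4)`, `p = π π̄` with coprime Gaussian primes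
`π, π̄`: every such `z` is divisible by `π` or by `π̄`, and by both exactly when `p ∣ z`, so
inclusion–exclusion gives `r(pm) = 2 r(m) - r(m/p)`.
-/

lemma chi4_mul (m n : ℕ) : chi4 (m * n) = chi4 m * chi4 n := by
  have hm : m % 4 < 4 := Nat.mod_lt _ (by norm_num)
  have hn : n % 4 < 4 := Nat.mod_lt _ (by norm_num)
  unfold chi4
  rw [Nat.mul_mod]
  interval_cases m % 4 <;> interval_cases n % 4 <;> rfl

def HeckeRecurrence {R : Type*} [CommRing R] (χ f : ℕ → R) : Prop :=
  ∀ p, p.Prime → ∀ m, f (p * m) = (1 + χ p) * f m - χ p * if p ∣ m then f (m / p) else 0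

namespace HeckeRecurrence

variable {R : Type*} [CommRing R] {χ f g : ℕ → R}

lemma const_mul (hf : HeckeRecurrence χ f) (a : R) : HeckeRecurrence χ fun n ↦ a * f n := by
  intro p hp m
  simp only [hf p hp m]
  split_ifs <;> ring

lemma eq_of_eq_at_one (hf : HeckeRecurrence χ f) (hg : HeckeRecurrence χ g) (h1 : f 1 = g 1)
    {n : ℕ} (hn : 0 < n) : f n = g n := by
  induction n using Nat.strong_induction_on with
  | _ n ih =>
    obtain rfl | hn1 := (Nat.one_le_iff_ne_zero.2 hn.ne').eq_or_lt
    · exact h1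
    set p := n.minFac
    have hp : p.Prime := Nat.minFac_prime hn1.ne'
    obtain ⟨m, hn_eq⟩ : p ∣ n := Nat.minFac_dvd n
    have hm : 0 < m := Nat.pos_of_mul_pos_left (hn_eq ▸ hn)
    have hmn : m < n := hn_eq ▸ lt_mul_left hm hp.one_lt
    rw [hn_eq, hf p hp, hg p hp, ih m hmn hm]
    split_ifs with hpm
    · have hmp : 0 < m / p := Nat.div_pos (Nat.le_of_dvd hm hpm) hp.pos
      rw [ih (m / p) ((Nat.div_le_self _ _).trans_lt hmn) hmp]
    · rfl

end HeckeRecurrence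

lemma Nat.divisors_prime_mul {p : ℕ} (hp : p.Prime) (m : ℕ) :
    (p * m).divisors = m.divisors ∪ m.divisors.image (p * ·) := by
  ext x
  simp [Nat.divisors_mul, hp.divisors, Finset.mem_mul]

lemma Nat.divisors_inter_image_prime_mul {p : ℕ} (hp : p.Prime) (m : ℕ) :
    m.divisors ∩ m.divisors.image (p * ·) =
      if p ∣ m then (m / p).divisors.image (p * ·) else ∅ := by
  split_ifs with hpm
  · obtain ⟨k, rfl⟩ := hpm
    have hp0 := hp.ne_zero
    ext x
    simp only [Finset.mem_inter, Finset.mem_image, Nat.mem_divisors,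
      Nat.mul_div_cancel_left _ hp.pos]
    constructor
    · rintro ⟨⟨hx, hm⟩, e, -, rfl⟩
      exact ⟨e, ⟨Nat.dvd_of_mul_dvd_mul_left hp.pos hx, right_ne_zero_of_mul hm⟩, rfl⟩
    · rintro ⟨e, ⟨he, hk⟩, rfl⟩
      exact ⟨⟨Nat.mul_dvd_mul_left p he, mul_ne_zero hp0 hk⟩, e,
        ⟨he.mul_left p, mul_ne_zero hp0 hk⟩, rfl⟩
  · ext x
    simp only [Finset.mem_inter, Finset.mem_image, Nat.mem_divisors, Finset.notMem_empty,
      iff_false]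
    rintro ⟨⟨hx, -⟩, e, -, rfl⟩
    exact hpm (dvd_of_mul_right_dvd hx)

lemma heckeRecurrence_sum_divisors {R : Type*} [CommRing R] {χ : ℕ → R}
    (hχ : ∀ a b, χ (a * b) = χ a * χ b) : HeckeRecurrence χ fun n ↦ ∑ d ∈ n.divisors, χ d := by
  intro p hp m
  have sum_image_mul : ∀ s : Finset ℕ, ∑ d ∈ s.image (p * ·), χ d = χ p * ∑ d ∈ s, χ d := by
    intro s
    rw [Finset.sum_image fun a _ b _ h ↦ Nat.eq_of_mul_eq_mul_left hp.pos h, Finset.mul_sum]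
    simp only [hχ]
  have h := Finset.sum_union_inter (s₁ := m.divisors) (s₂ := m.divisors.image (p * ·)) (f := χ)
  rw [← Nat.divisors_prime_mul hp, Nat.divisors_inter_image_prime_mul hp, sum_image_mul] at h
  rw [eq_sub_iff_add_eq, add_mul, one_mul, ← h]
  split_ifs <;> simp [sum_image_mul]

local notation "ℤ[i]" => GaussianInt

namespace GaussianInt

lemma finite_setOf_norm_eq (n : ℤ) : {z : ℤ[i] | z.norm = n}.Finite := by
  have hinj : Function.Injective fun z : ℤ[i] ↦ (z.re, z.im) := fun z w h ↦
    Zsqrtd.ext (congrArg Prod.fst h) (congrArg Prod.snd h)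
  refine (((Set.finite_Icc (-n) n).prod (Set.finite_Icc (-n) n)).preimage hinj.injOn).subset ?_
  intro z hz
  simp only [Set.mem_ofPred_eq, Zsqrtd.norm_def] at hz
  simp only [Set.mem_preimage, Set.mem_prod, Set.mem_Icc]
  refine ⟨⟨?_, ?_⟩, ?_, ?_⟩ <;>
    nlinarith [Int.le_self_sq z.re, Int.le_self_sq (-z.re), Int.le_self_sq z.im,
      Int.le_self_sq (-z.im)]

lemma finite_setOf_norm_eq_and (n : ℤ) (P : ℤ[i] → Prop) :
    {z : ℤ[i] | z.norm = n ∧ P z}.Finite :=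
  (finite_setOf_norm_eq n).subset fun _ hz ↦ hz.1

lemma ncard_setOf_norm_eq_and_dvd {π : ℤ[i]} (hπ : π ≠ 0) {n m : ℤ} (hn : n = π.norm * m) :
    {z : ℤ[i] | z.norm = n ∧ π ∣ z}.ncard = {w : ℤ[i] | w.norm = m}.ncard := by
  have : {z : ℤ[i] | z.norm = n ∧ π ∣ z} = (π * ·) '' {w | w.norm = m} := by
    ext z
    constructor
    · rintro ⟨hz, w, rfl⟩
      rw [Zsqrtd.norm_mul, hn] at hz
      exact ⟨w, mul_left_cancel₀ (norm_eq_zero.not.2 hπ) hz, rfl⟩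
    · rintro ⟨w, hw, rfl⟩
      exact ⟨by rw [Zsqrtd.norm_mul, hw, hn], dvd_mul_right π w⟩
  rw [this, Set.ncard_image_of_injective _ (mul_right_injective₀ hπ)]

noncomputable def normCount (n : ℕ) : ℤ := {z : ℤ[i] | z.norm = n}.ncard

lemma ncard_setOf_norm_eq_mul_and_natCast_dvd {p : ℕ} (hp : 0 < p) (m : ℕ) :
    ({z : ℤ[i] | z.norm = ((p * m : ℕ) : ℤ) ∧ (p : ℤ[i]) ∣ z}.ncard : ℤ) =
      if p ∣ m then normCount (m / p) else 0 := by
  split_ifs with hpm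
  · obtain ⟨k, rfl⟩ := hpm
    have hp0 : (p : ℤ[i]) ≠ 0 := by exact_mod_cast hp.ne'
    rw [Nat.mul_div_cancel_left _ hp, normCount, ncard_setOf_norm_eq_and_dvd hp0]
    push_cast [Zsqrtd.norm_natCast]
    ring
  · rw [Nat.cast_eq_zero, Set.ncard_eq_zero (finite_setOf_norm_eq_and _ _)]
    refine Set.eq_empty_of_forall_notMem ?_
    rintro z ⟨hz, w, rfl⟩
    rw [Zsqrtd.norm_mul, Zsqrtd.norm_natCast, Nat.cast_mul, mul_assoc] at hz
    have hp0 : (p : ℤ) ≠ 0 := by exact_mod_cast hp.ne'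
    exact hpm (Int.natCast_dvd_natCast.1 ⟨_, (mul_left_cancel₀ hp0 hz).symm⟩)

lemma prime_of_natAbs_norm_prime {π : ℤ[i]} (h : π.norm.natAbs.Prime) : Prime π := by
  refine irreducible_iff_prime.1
    ⟨fun hu ↦ h.ne_one (Zsqrtd.norm_eq_one_iff.2 hu), fun a b hab ↦ ?_⟩
  rw [hab, Zsqrtd.norm_mul, Int.natAbs_mul, Nat.prime_mul_iff] at h
  rw [← Zsqrtd.norm_eq_one_iff, ← Zsqrtd.norm_eq_one_iff]
  tauto

lemma dvd_or_star_dvd_of_dvd_norm {π z : ℤ[i]} (hπ : Prime π) (h : π ∣ (z.norm : ℤ[i])) :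
    π ∣ z ∨ star π ∣ z := by
  rw [Zsqrtd.norm_eq_mul_conj] at h
  refine (hπ.dvd_or_dvd h).imp id fun ⟨c, hc⟩ ↦ ⟨star c, ?_⟩
  rw [← star_star z, hc, star_mul, mul_comm]

lemma setOf_norm_eq_union {π : ℤ[i]} (hπ : Prime π) {n : ℤ} (h : π ∣ (n : ℤ[i])) :
    {z : ℤ[i] | z.norm = n} = {z | z.norm = n ∧ π ∣ z} ∪ {z | z.norm = n ∧ star π ∣ z} := by
  ext z
  simp only [Set.mem_ofPred_eq, Set.mem_union, ← and_or_left, iff_self_and]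
  rintro rfl
  exact dvd_or_star_dvd_of_dvd_norm hπ h

lemma setOf_norm_eq_of_dvd_star {π : ℤ[i]} (hπ : Prime π) (hstar : π ∣ star π) {n : ℤ}
    (h : π ∣ (n : ℤ[i])) : {z : ℤ[i] | z.norm = n} = {z | z.norm = n ∧ π ∣ z} := by
  rw [setOf_norm_eq_union hπ h, Set.union_eq_left]
  exact fun z ⟨hz, hd⟩ ↦ ⟨hz, hstar.trans hd⟩

lemma not_dvd_star_of_norm_eq_prime {π : ℤ[i]} {p : ℕ} (hp : p.Prime) (hp2 : p ≠ 2)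
    (hπ : π.norm = p) : ¬π ∣ star π := by
  intro h
  have hpZ : Prime (p : ℤ) := Nat.prime_iff_prime_int.1 hp
  have dvd_of_dvd_two_mul : ∀ k : ℤ, π ∣ ((2 * k : ℤ) : ℤ[i]) → (p : ℤ) ∣ k := fun k hk ↦ by
    have : π.norm ∣ ((2 * k : ℤ) : ℤ[i]).norm := map_dvd Zsqrtd.normMonoidHom hk
    rw [Zsqrtd.norm_intCast, hπ] at this
    rcases hpZ.dvd_or_dvd this with h2k | h2k <;>
      refine (hpZ.dvd_or_dvd h2k).resolve_left fun h2 ↦ hp2 ?_ <;>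
      exact (Nat.prime_dvd_prime_iff_eq hp Nat.prime_two).1 (by exact_mod_cast h2)
  -- `π + π̄ = 2 re π` and `(π - π̄) (-i) = 2 im π`
  have hre : (p : ℤ) ∣ π.re := dvd_of_dvd_two_mul _ <| by
    convert dvd_add dvd_rfl h using 1
    ext <;> simp [two_mul]
  have him : (p : ℤ) ∣ π.im := dvd_of_dvd_two_mul _ <| by
    convert dvd_mul_of_dvd_left (dvd_sub dvd_rfl h) (⟨0, -1⟩ : ℤ[i]) using 1
    ext <;> simp [two_mul]
  have hp_sq_dvd : (p : ℤ) * p ∣ π.norm := by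
    rw [Zsqrtd.norm_def]
    exact dvd_sub (mul_dvd_mul hre hre) (mul_dvd_mul (dvd_mul_of_dvd_right him _) him)
  rw [hπ] at hp_sq_dvd
  nlinarith [Int.le_of_dvd (by exact_mod_cast hp.pos) hp_sq_dvd, hp.two_le]

lemma normCount_two_mul (m : ℕ) : normCount (2 * m) = normCount m := by
  set π : ℤ[i] := ⟨1, 1⟩
  have hπ : π.norm = 2 := rfl
  have hprime : Prime π := prime_of_natAbs_norm_prime (by rw [hπ]; exact Nat.prime_two)
  have hstar : π ∣ star π := ⟨⟨0, -1⟩, rfl⟩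
  have hdvd : π ∣ (((2 * m : ℕ) : ℤ) : ℤ[i]) := ⟨star π * m, by ext <;> simp [π, two_mul]⟩
  rw [normCount, normCount, setOf_norm_eq_of_dvd_star hprime hstar hdvd,
    ncard_setOf_norm_eq_and_dvd hprime.ne_zero (by push_cast; rw [hπ])]

lemma normCount_prime_mul_of_mod_four_eq_three {p : ℕ} (hp : p.Prime) (hp3 : p % 4 = 3)
    (m : ℕ) : normCount (p * m) = if p ∣ m then normCount (m / p) else 0 := by
  have := Fact.mk hp
  have hprime := prime_of_nat_prime_of_mod_four_eq_three p hp3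
  have hdvd : (p : ℤ[i]) ∣ (((p * m : ℕ) : ℤ) : ℤ[i]) := ⟨m, by push_cast; rfl⟩
  rw [normCount, setOf_norm_eq_of_dvd_star hprime (by rw [star_natCast]) hdvd]
  exact ncard_setOf_norm_eq_mul_and_natCast_dvd hp.pos m

lemma normCount_prime_mul_of_mod_four_eq_one {p : ℕ} (hp : p.Prime) (hp1 : p % 4 = 1)
    (m : ℕ) : normCount (p * m) = 2 * normCount m - if p ∣ m then normCount (m / p) else 0 := by
  have := Fact.mk hp
  obtain ⟨a, b, hab⟩ := Nat.Prime.sq_add_sq (p := p) (by omega)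
  set π : ℤ[i] := ⟨a, b⟩
  have hπ : π.norm = p := by
    rw [Zsqrtd.norm_def, ← hab]
    push_cast
    ring
  have hprime : Prime π := prime_of_natAbs_norm_prime (by rw [hπ]; exact hp)
  have hmul : π * star π = p := by rw [← Zsqrtd.norm_eq_mul_conj, hπ, Int.cast_natCast]
  have hcop : IsCoprime π (star π) :=
    hprime.coprime_iff_not_dvd.2 (not_dvd_star_of_norm_eq_prime hp (by omega) hπ)
  have hdvd : π ∣ (((p * m : ℕ) : ℤ) : ℤ[i]) := ⟨star π * m, by push_cast; rw [← hmul]; ring⟩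
  have hinter : {z : ℤ[i] | z.norm = ((p * m : ℕ) : ℤ) ∧ π ∣ z} ∩
      {z | z.norm = ((p * m : ℕ) : ℤ) ∧ star π ∣ z} =
      {z | z.norm = ((p * m : ℕ) : ℤ) ∧ (p : ℤ[i]) ∣ z} := by
    ext z
    simp only [Set.mem_inter_iff, Set.mem_ofPred_eq, ← hmul]
    exact ⟨fun ⟨⟨hz, h1⟩, _, h2⟩ ↦ ⟨hz, hcop.mul_dvd h1 h2⟩,
      fun ⟨hz, h⟩ ↦ ⟨⟨hz, dvd_of_mul_right_dvd h⟩, hz, dvd_of_mul_left_dvd h⟩⟩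
  have hcount := Set.ncard_union_add_ncard_inter _ _
    (finite_setOf_norm_eq_and ((p * m : ℕ) : ℤ) (π ∣ ·))
    (finite_setOf_norm_eq_and ((p * m : ℕ) : ℤ) (star π ∣ ·))
  rw [← setOf_norm_eq_union hprime hdvd, hinter,
    ncard_setOf_norm_eq_and_dvd hprime.ne_zero (by push_cast; rw [hπ]),
    ncard_setOf_norm_eq_and_dvd (star_ne_zero.2 hprime.ne_zero)
      (by push_cast; rw [Zsqrtd.norm_conj, hπ])] at hcount
  rw [normCount, ← ncard_setOf_norm_eq_mul_and_natCast_dvd hp.pos m, normCount]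
  omega

lemma heckeRecurrence_normCount : HeckeRecurrence chi4 normCount := by
  intro p hp m
  rcases hp.eq_two_or_odd with rfl | hodd
  · rw [normCount_two_mul, show chi4 2 = 0 from rfl]
    ring
  · rcases (by omega : p % 4 = 1 ∨ p % 4 = 3) with hp1 | hp3
    · rw [normCount_prime_mul_of_mod_four_eq_one hp hp1, chi4, if_pos hp1]
      ring
    · rw [normCount_prime_mul_of_mod_four_eq_three hp hp3, chi4,
        if_neg (show p % 4 ≠ 1 by omega), if_pos hp3]
      ring

lemma setOf_norm_eq_one :
    {z : ℤ[i] | z.norm = 1} = ↑({⟨1, 0⟩, ⟨-1, 0⟩, ⟨0, 1⟩, ⟨0, -1⟩} : Finset ℤ[i]) := by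
  ext ⟨a, b⟩
  simp only [Set.mem_ofPred_eq, Zsqrtd.norm_def, Finset.coe_insert, Finset.coe_singleton,
    Set.mem_insert_iff, Set.mem_singleton_iff, Zsqrtd.mk.injEq]
  constructor
  · intro h
    rw [neg_one_mul, neg_mul, sub_neg_eq_add] at h
    have ha : -1 ≤ a ∧ a ≤ 1 := ⟨by nlinarith, by nlinarith⟩
    have hb : -1 ≤ b ∧ b ≤ 1 := ⟨by nlinarith, by nlinarith⟩
    obtain ⟨ha1, ha2⟩ := ha
    obtain ⟨hb1, hb2⟩ := hb
    interval_cases a <;> interval_cases b <;> simp_all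
  · rintro (⟨rfl, rfl⟩ | ⟨rfl, rfl⟩ | ⟨rfl, rfl⟩ | ⟨rfl, rfl⟩) <;> rfl

lemma normCount_one : normCount 1 = 4 := by
  rw [normCount, Nat.cast_one, setOf_norm_eq_one, Set.ncard_coe_finset]
  rfl

lemma card_sq_add_sq_eq_normCount (n : ℕ) :
    (Nat.card {p : ℤ × ℤ // p.1 ^ 2 + p.2 ^ 2 = (n : ℤ)} : ℤ) = normCount n := by
  let e : ℤ × ℤ ≃ ℤ[i] := ⟨fun p ↦ ⟨p.1, p.2⟩, fun z ↦ (z.re, z.im), fun _ ↦ rfl, fun _ ↦ rfl⟩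
  have : {p : ℤ × ℤ // p.1 ^ 2 + p.2 ^ 2 = (n : ℤ)} ≃ {z : ℤ[i] | z.norm = n} :=
    e.subtypeEquiv fun p ↦ by simp [e, Zsqrtd.norm_def, sq]
  rw [normCount, Nat.card_congr this, Nat.card_coe_set_eq]

end GaussianInt

theorem sum_two_squares_count (n : ℕ) (hn : 0 < n) :
    (Nat.card {p : ℤ × ℤ // p.1 ^ 2 + p.2 ^ 2 = (n : ℤ)} : ℤ) =
      4 * ∑ d ∈ n.divisors, chi4 d := by
  rw [GaussianInt.card_sq_add_sq_eq_normCount]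
  refine GaussianInt.heckeRecurrence_normCount.eq_of_eq_at_one
    ((heckeRecurrence_sum_divisors chi4_mul).const_mul 4) ?_ hn
  simp [GaussianInt.normCount_one, chi4]
end

section
/- For z in the upper half-plane, ∑_{n∈ℤ} e^{πin²z} = ∏_{n=1}^∞ (1 - e^{2πinz})(1 + e^{πi(2n-1)z})². -/
/-!
Gauss's q-binomial theorem `∏_{j<N} (y + x Q^j) = ∑_k [N, k]_Q Q^(k choose 2) x^k y^(N-k)`,
taken at `Q = q²`, `x = q`, `y = q^(2m)` and divided by `q^(3m²)`, gives the finite identity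
`∏_{l<m} (1 + q^(2l+1))² = ∑_{|n| ≤ m} [2m, m+n]_{q²} q^(n²)`. After multiplying by
`∏_{j<m} (1 - q^(2j+2))`, the coefficient of `q^(n²)` becomes a product of factors `1 - q^(2e)`
with `e > m - |n|`. It is therefore bounded independently of `m` and `n`, and tends to `1` as
`m → ∞`, so Tannery's theorem turns the partial products into the theta series.
-/

open Finset

section CommRing

variable {R : Type*} [CommRing R]

def qBinomial (Q : R) : ℕ → ℕ → R
  | _, 0 => 1
  | 0, _ + 1 => 0
  | N + 1, k + 1 => qBinomial Q N k + Q ^ (k + 1) * qBinomial Q N (k + 1)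

@[simp] lemma qBinomial_zero_right (Q : R) (N : ℕ) : qBinomial Q N 0 = 1 := by
  cases N <;> rfl

lemma qBinomial_succ_succ (Q : R) (N k : ℕ) :
    qBinomial Q (N + 1) (k + 1) = qBinomial Q N k + Q ^ (k + 1) * qBinomial Q N (k + 1) := rfl

lemma qBinomial_eq_zero_of_lt (Q : R) {N k : ℕ} (h : N < k) : qBinomial Q N k = 0 := by
  obtain ⟨k, rfl⟩ := Nat.exists_eq_add_one_of_ne_zero (by omega : k ≠ 0)
  induction N generalizing k with
  | zero => rfl
  | succ N ih =>
    obtain ⟨k, rfl⟩ := Nat.exists_eq_add_one_of_ne_zero (by omega : k ≠ 0)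
    rw [qBinomial_succ_succ, ih k (by omega), ih (k + 1) (by omega), mul_zero, add_zero]

@[simp] lemma qBinomial_self (Q : R) (N : ℕ) : qBinomial Q N N = 1 := by
  induction N with
  | zero => rfl
  | succ N ih =>
    rw [qBinomial_succ_succ, ih, qBinomial_eq_zero_of_lt Q N.lt_add_one, mul_zero, add_zero]

lemma choose_two_succ (k : ℕ) : (k + 1).choose 2 = k.choose 2 + k := by
  rw [Nat.choose_succ_succ', Nat.choose_one_right, add_comm]

theorem prod_add_mul_pow_eq_sum_qBinomial (Q x y : R) (N : ℕ) :
    ∏ j ∈ range N, (y + x * Q ^ j) =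
      ∑ k ∈ range (N + 1), qBinomial Q N k * Q ^ k.choose 2 * x ^ k * y ^ (N - k) := by
  induction N generalizing x with
  | zero => simp
  | succ N ih =>
    set a : ℕ → R := fun k => qBinomial Q N k * Q ^ k.choose 2 * (x * Q) ^ k with ha
    have hcoeff (k : ℕ) : qBinomial Q (N + 1) (k + 1) * Q ^ (k + 1).choose 2 * x ^ (k + 1) =
        x * a k + a (k + 1) := by
      simp only [ha, qBinomial_succ_succ, choose_two_succ]
      ring
    have hlast : a (N + 1) = 0 := by simp only [ha, qBinomial_eq_zero_of_lt Q N.lt_add_one]; ring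
    have hy : y * ∑ k ∈ range (N + 1), a k * y ^ (N - k) =
        ∑ k ∈ range (N + 1), a (k + 1) * y ^ (N - k) + y ^ (N + 1) := by
      rw [sum_range_succ (fun k => a (k + 1) * y ^ (N - k)) N, hlast, zero_mul, add_zero, mul_sum,
        sum_range_succ']
      congr 1
      · refine sum_congr rfl fun k hk => ?_
        rw [mul_left_comm, ← pow_succ']
        congr 2
        have := mem_range.mp hk
        omega
      · simp [ha, pow_succ']
    calc ∏ j ∈ range (N + 1), (y + x * Q ^ j)
        = (y + x) * ∏ j ∈ range N, (y + x * Q * Q ^ j) := by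
          rw [prod_range_succ', pow_zero, mul_one, mul_comm]
          simp only [pow_succ', mul_assoc]
      _ = y * ∑ k ∈ range (N + 1), a k * y ^ (N - k) +
            x * ∑ k ∈ range (N + 1), a k * y ^ (N - k) := by
          rw [ih, add_mul]
      _ = _ := by
          rw [hy, sum_range_succ' (fun k => qBinomial Q (N + 1) k * Q ^ k.choose 2 * x ^ k *
            y ^ (N + 1 - k))]
          simp_rw [hcoeff, Nat.add_sub_add_right, add_mul, sum_add_distrib, mul_sum, mul_assoc]
          simp only [qBinomial_zero_right, Nat.choose_zero_succ, pow_zero, tsub_zero, one_mul]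
          ring

/-- `qPochhammer Q a n` is `(Q^(a+1); Q)_n` in the usual notation. -/
def qPochhammer (Q : R) (a n : ℕ) : R :=
  ∏ j ∈ range n, (1 - Q ^ (a + j + 1))

@[simp] lemma qPochhammer_zero_right (Q : R) (a : ℕ) : qPochhammer Q a 0 = 1 := prod_range_zero _

lemma qPochhammer_succ (Q : R) (a n : ℕ) :
    qPochhammer Q a (n + 1) = qPochhammer Q a n * (1 - Q ^ (a + n + 1)) :=
  prod_range_succ _ n

lemma qPochhammer_add (Q : R) (a m n : ℕ) :
    qPochhammer Q a (m + n) = qPochhammer Q a m * qPochhammer Q (a + m) n := by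
  simp only [qPochhammer, prod_range_add, add_assoc]

lemma qPochhammer_succ' (Q : R) (a n : ℕ) :
    qPochhammer Q a (n + 1) = (1 - Q ^ (a + 1)) * qPochhammer Q (a + 1) n := by
  rw [add_comm n, qPochhammer_add, qPochhammer, prod_range_one, add_zero]

lemma qBinomial_add_succ_succ (Q : R) (i k : ℕ) :
    qBinomial Q (i + 1 + (k + 1)) (k + 1) =
      qBinomial Q (i + 1 + k) k + Q ^ (k + 1) * qBinomial Q (i + (k + 1)) (k + 1) := by
  rw [show i + 1 + (k + 1) = i + 1 + k + 1 by omega, qBinomial_succ_succ,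
    show i + (k + 1) = i + 1 + k by omega]

theorem qBinomial_mul_qPochhammer_zero_left (Q : R) (i k : ℕ) :
    qBinomial Q (i + k) k * qPochhammer Q 0 k = qPochhammer Q i k := by
  induction i generalizing k with
  | zero => simp
  | succ i ih =>
    induction k with
    | zero => simp
    | succ k ihk =>
      rw [qBinomial_add_succ_succ, add_mul, qPochhammer_succ, ← mul_assoc, ihk, mul_assoc,
        ← qPochhammer_succ, ih, qPochhammer_succ', qPochhammer_succ]
      ring

theorem qBinomial_mul_qPochhammer_zero_right (Q : R) (i k : ℕ) :
    qBinomial Q (i + k) k * qPochhammer Q 0 i = qPochhammer Q k i := by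
  induction i generalizing k with
  | zero => simp
  | succ i ih =>
    induction k with
    | zero => simp
    | succ k ihk =>
      rw [qBinomial_add_succ_succ, add_mul, ihk, qPochhammer_succ Q 0 i, ← mul_assoc,
        mul_assoc _ _ (qPochhammer Q 0 i), mul_right_comm, ih, qPochhammer_succ', qPochhammer_succ]
      ring

lemma qBinomial_mul_qPochhammer_of_le_left (Q : R) {i k m : ℕ} (hk : k ≤ m) :
    qBinomial Q (i + k) k * qPochhammer Q 0 m = qPochhammer Q i k * qPochhammer Q k (m - k) := by
  obtain ⟨c, rfl⟩ := Nat.exists_eq_add_of_le hk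
  rw [qPochhammer_add, ← mul_assoc, qBinomial_mul_qPochhammer_zero_left, zero_add,
    Nat.add_sub_cancel_left]

lemma qBinomial_mul_qPochhammer_of_le_right (Q : R) {i k m : ℕ} (hi : i ≤ m) :
    qBinomial Q (i + k) k * qPochhammer Q 0 m = qPochhammer Q k i * qPochhammer Q i (m - i) := by
  obtain ⟨c, rfl⟩ := Nat.exists_eq_add_of_le hi
  rw [qPochhammer_add, ← mul_assoc, qBinomial_mul_qPochhammer_zero_right, zero_add,
    Nat.add_sub_cancel_left]

def thetaCoeff (Q : R) (m : ℕ) (n : ℤ) : R :=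
  qBinomial Q (2 * m) (m + n).toNat * qPochhammer Q 0 m

lemma thetaCoeff_eq (Q : R) {m : ℕ} {n : ℤ} (hn : n.natAbs ≤ m) :
    thetaCoeff Q m n =
      qPochhammer Q (m + n.natAbs) (m - n.natAbs) * qPochhammer Q (m - n.natAbs) n.natAbs := by
  rcases Int.natAbs_eq n with h | h
  · have hidx : (m + n).toNat = m + n.natAbs := by omega
    rw [thetaCoeff, hidx, show 2 * m = (m - n.natAbs) + (m + n.natAbs) by omega,
      qBinomial_mul_qPochhammer_of_le_right Q (Nat.sub_le m _), Nat.sub_sub_self hn]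
  · have hidx : (m + n).toNat = m - n.natAbs := by omega
    rw [thetaCoeff, hidx, show 2 * m = (m + n.natAbs) + (m - n.natAbs) by omega,
      qBinomial_mul_qPochhammer_of_le_left Q (Nat.sub_le m _), Nat.sub_sub_self hn]

lemma two_mul_choose_two_add_self (k : ℕ) : 2 * k.choose 2 + k = k * k := by
  induction k with
  | zero => rfl
  | succ k ih => rw [choose_two_succ]; linarith

lemma sum_range_two_mul_add_one_eq_sq (m : ℕ) : ∑ j ∈ range m, (2 * j + 1) = m ^ 2 := by
  induction m with
  | zero => rfl
  | succ m ih => rw [sum_range_succ, ih]; ring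

lemma prod_pow_two_mul_add_pow_odd (q : R) (m : ℕ) :
    ∏ j ∈ range m, (q ^ (2 * m) + q ^ (2 * j + 1)) =
      q ^ (m ^ 2) * ∏ l ∈ range m, (1 + q ^ (2 * l + 1)) := by
  have hfactor : ∀ j ∈ range m, q ^ (2 * m) + q ^ (2 * j + 1) =
      q ^ (2 * j + 1) * (1 + q ^ (2 * (m - 1 - j) + 1)) := by
    intro j hj
    have := mem_range.mp hj
    rw [mul_add, mul_one, ← pow_add, add_comm,
      show 2 * j + 1 + (2 * (m - 1 - j) + 1) = 2 * m by omega]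
  rw [prod_congr rfl hfactor, prod_mul_distrib, prod_pow_eq_pow_sum,
    sum_range_two_mul_add_one_eq_sq, prod_range_reflect (fun l => 1 + q ^ (2 * l + 1))]

lemma prod_range_two_mul_pow_add (q : R) (m : ℕ) :
    ∏ j ∈ range (2 * m), (q ^ (2 * m) + q * (q ^ 2) ^ j) =
      q ^ (3 * m ^ 2) * (∏ l ∈ range m, (1 + q ^ (2 * l + 1))) ^ 2 := by
  have hfirst : ∀ j ∈ range m, q ^ (2 * m) + q * (q ^ 2) ^ j = q ^ (2 * m) + q ^ (2 * j + 1) :=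
    fun j _ => by ring
  have hsecond : ∀ j ∈ range m, q ^ (2 * m) + q * (q ^ 2) ^ (m + j) =
      q ^ (2 * m) * (1 + q ^ (2 * j + 1)) := fun j _ => by ring
  rw [two_mul m, prod_range_add, ← two_mul, prod_congr rfl hfirst, prod_congr rfl hsecond,
    prod_pow_two_mul_add_pow_odd, prod_mul_distrib, prod_const, card_range]
  ring

lemma sum_range_two_mul_add_one_eq_sum_Icc {M : Type*} [AddCommMonoid M] (f : ℕ → M) (m : ℕ) :
    ∑ k ∈ range (2 * m + 1), f k = ∑ n ∈ Icc (-m : ℤ) m, f (m + n).toNat := by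
  refine sum_nbij' (fun k => (k : ℤ) - m) (fun n => (m + n).toNat) ?_ ?_ ?_ ?_ ?_ <;>
    intro x hx <;> simp only [mem_range, mem_Icc] at hx ⊢
  all_goals first | omega | congr 1; omega

theorem prod_one_add_pow_odd_sq [IsDomain R] {q : R} (hq : q ≠ 0) (m : ℕ) :
    (∏ l ∈ range m, (1 + q ^ (2 * l + 1))) ^ 2 =
      ∑ n ∈ Icc (-m : ℤ) m, qBinomial (q ^ 2) (2 * m) (m + n).toNat * q ^ (n.natAbs ^ 2) := by
  have hgauss := prod_add_mul_pow_eq_sum_qBinomial (q ^ 2) q (q ^ (2 * m)) (2 * m)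
  rw [prod_range_two_mul_pow_add, sum_range_two_mul_add_one_eq_sum_Icc] at hgauss
  refine mul_left_cancel₀ (pow_ne_zero (3 * m ^ 2) hq) (hgauss.trans ?_)
  rw [mul_sum]
  refine sum_congr rfl fun n hn => ?_
  rw [mem_Icc] at hn
  have hk : ((m + n).toNat : ℤ) = m + n := by omega
  set k := (m + n).toNat
  have hexponent : 2 * k.choose 2 + k + 2 * m * (2 * m - k) = 3 * m ^ 2 + n.natAbs ^ 2 := by
    rw [two_mul_choose_two_add_self]
    zify [show k ≤ 2 * m by omega]
    rw [hk, sq_abs]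
    ring
  rw [mul_left_comm, ← pow_add, ← hexponent]
  ring

theorem prod_range_eq_sum_thetaCoeff [IsDomain R] {q : R} (hq : q ≠ 0) (m : ℕ) :
    ∏ j ∈ range m, (1 - (q ^ 2) ^ (j + 1)) * (1 + q ^ (2 * j + 1)) ^ 2 =
      ∑ n ∈ Icc (-m : ℤ) m, thetaCoeff (q ^ 2) m n * q ^ (n.natAbs ^ 2) := by
  rw [prod_mul_distrib, prod_pow, prod_one_add_pow_odd_sq hq, mul_sum]
  refine sum_congr rfl fun n _ => ?_
  simp only [thetaCoeff, qPochhammer, zero_add]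
  ring

end CommRing

open Filter Topology

section NormedCommRing

variable {R : Type*} [NormedCommRing R] [NormOneClass R] {Q : R}

lemma norm_qPochhammer_sub_one_le (hQ : ‖Q‖ < 1) (a n : ℕ) :
    ‖qPochhammer Q a n - 1‖ ≤ Real.exp (‖Q‖ ^ (a + 1) / (1 - ‖Q‖)) - 1 := by
  have hsum : ∑ j ∈ range n, ‖-Q ^ (a + j + 1)‖ ≤ ‖Q‖ ^ (a + 1) / (1 - ‖Q‖) := calc
    _ ≤ ∑ j ∈ range n, ‖Q‖ ^ (a + 1 + j) := sum_le_sum fun j _ => by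
        rw [norm_neg, add_right_comm]; exact norm_pow_le _ _
    _ = ∑ i ∈ Ico (a + 1) (a + 1 + n), ‖Q‖ ^ i := by
        rw [sum_Ico_eq_sum_range, Nat.add_sub_cancel_left]
    _ ≤ _ := geom_sum_Ico_le_of_lt_one (norm_nonneg _) hQ
  calc ‖qPochhammer Q a n - 1‖ = ‖∏ j ∈ range n, (1 + -Q ^ (a + j + 1)) - 1‖ := by
        simp only [qPochhammer, sub_eq_add_neg]
    _ ≤ Real.exp (∑ j ∈ range n, ‖-Q ^ (a + j + 1)‖) - 1 := norm_prod_one_add_sub_one_le _ _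
    _ ≤ _ := by gcongr

lemma norm_qPochhammer_le (hQ : ‖Q‖ < 1) (a n : ℕ) :
    ‖qPochhammer Q a n‖ ≤ Real.exp (1 / (1 - ‖Q‖)) := by
  have hpow : ‖Q‖ ^ (a + 1) ≤ 1 := pow_le_one₀ (norm_nonneg _) hQ.le
  calc ‖qPochhammer Q a n‖ ≤ ‖qPochhammer Q a n - 1‖ + ‖(1 : R)‖ := norm_le_norm_sub_add _ _
    _ ≤ Real.exp (‖Q‖ ^ (a + 1) / (1 - ‖Q‖)) := by
        rw [norm_one]; linarith [norm_qPochhammer_sub_one_le hQ a n]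
    _ ≤ _ := by gcongr

lemma tendsto_qPochhammer {α : Type*} {l : Filter α} (hQ : ‖Q‖ < 1) {a n : α → ℕ}
    (ha : Tendsto a l atTop) : Tendsto (fun t => qPochhammer Q (a t) (n t)) l (𝓝 1) := by
  have hpow : Tendsto (fun t => ‖Q‖ ^ (a t + 1)) l (𝓝 0) :=
    (tendsto_pow_atTop_nhds_zero_of_lt_one (norm_nonneg _) hQ).comp
      ((tendsto_add_atTop_nat 1).comp ha)
  have hbound : Tendsto (fun t => Real.exp (‖Q‖ ^ (a t + 1) / (1 - ‖Q‖)) - 1) l (𝓝 0) := by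
    have hcont : Continuous fun x : ℝ => Real.exp (x / (1 - ‖Q‖)) - 1 := by fun_prop
    simpa [Function.comp_def] using (hcont.tendsto 0).comp hpow
  rw [← tendsto_sub_nhds_zero_iff]
  exact squeeze_zero_norm (fun t => norm_qPochhammer_sub_one_le hQ _ _) hbound

lemma norm_thetaCoeff_le (hQ : ‖Q‖ < 1) {m : ℕ} {n : ℤ} (hn : n.natAbs ≤ m) :
    ‖thetaCoeff Q m n‖ ≤ Real.exp (1 / (1 - ‖Q‖)) ^ 2 := by
  rw [thetaCoeff_eq Q hn, sq]
  exact (norm_mul_le _ _).trans (mul_le_mul (norm_qPochhammer_le hQ _ _)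
    (norm_qPochhammer_le hQ _ _) (norm_nonneg _) (Real.exp_pos _).le)

lemma tendsto_thetaCoeff (hQ : ‖Q‖ < 1) (n : ℤ) :
    Tendsto (fun m => thetaCoeff Q m n) atTop (𝓝 1) := by
  have hprod : Tendsto (fun m => qPochhammer Q (m + n.natAbs) (m - n.natAbs) *
      qPochhammer Q (m - n.natAbs) n.natAbs) atTop (𝓝 1) := by
    simpa using (tendsto_qPochhammer hQ (tendsto_add_atTop_nat _)).mul
      (tendsto_qPochhammer hQ (tendsto_sub_atTop_nat _))
  refine hprod.congr' ?_
  filter_upwards [eventually_ge_atTop n.natAbs] with m hm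
  exact (thetaCoeff_eq Q hm).symm

end NormedCommRing

lemma summable_norm_pow_of_le {R : Type*} [NormedRing R] [NormOneClass R] {Q : R} (hQ : ‖Q‖ < 1)
    {e : ℕ → ℕ} (he : ∀ j, j ≤ e j) : Summable fun j => ‖Q ^ e j‖ :=
  (summable_geometric_of_lt_one (norm_nonneg _) hQ).of_nonneg_of_le (fun _ => norm_nonneg _)
    fun j => (norm_pow_le _ _).trans (pow_le_pow_of_le_one (norm_nonneg _) hQ.le (he j))

lemma multipliable_theta_factor {R : Type*} [NormedCommRing R] [NormOneClass R] [CompleteSpace R]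
    {q : R} (hq : ‖q‖ < 1) :
    Multipliable fun j : ℕ => (1 - (q ^ 2) ^ (j + 1)) * (1 + q ^ (2 * j + 1)) ^ 2 := by
  have hq2 : ‖q ^ 2‖ < 1 := (norm_pow_le _ _).trans_lt (pow_lt_one₀ (norm_nonneg _) hq two_ne_zero)
  have heven : Multipliable fun j : ℕ => 1 + -(q ^ 2) ^ (j + 1) :=
    multipliable_one_add_of_summable (by
      simpa only [norm_neg] using summable_norm_pow_of_le hq2 fun j => j.le_succ)
  have hodd : Multipliable fun j : ℕ => 1 + q ^ (2 * j + 1) :=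
    multipliable_one_add_of_summable (summable_norm_pow_of_le hq fun j => by omega)
  simpa only [← sub_eq_add_neg, sq] using heven.mul (hodd.mul hodd)

lemma summable_pow_natAbs_sq {r : ℝ} (h0 : 0 ≤ r) (h1 : r < 1) :
    Summable fun n : ℤ => r ^ (n.natAbs ^ 2) := by
  have hnat : Summable fun k : ℕ => r ^ (k ^ 2) :=
    (summable_geometric_of_lt_one h0 h1).of_nonneg_of_le (fun _ => by positivity)
      fun k => pow_le_pow_of_le_one h0 h1.le (Nat.le_self_pow two_ne_zero k)
  exact Summable.of_nat_of_neg (by simpa using hnat) (by simpa using hnat)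

theorem tsum_pow_natAbs_sq_eq_tprod {𝕜 : Type*} [NormedField 𝕜] [CompleteSpace 𝕜] {q : 𝕜}
    (hq0 : q ≠ 0) (hq : ‖q‖ < 1) :
    ∑' n : ℤ, q ^ (n.natAbs ^ 2) =
      ∏' j : ℕ, (1 - (q ^ 2) ^ (j + 1)) * (1 + q ^ (2 * j + 1)) ^ 2 := by
  have hq2 : ‖q ^ 2‖ < 1 := by rw [norm_pow]; exact pow_lt_one₀ (norm_nonneg _) hq two_ne_zero
  set term : ℕ → ℤ → 𝕜 := fun m n =>
    if n ∈ Icc (-m : ℤ) m then thetaCoeff (q ^ 2) m n * q ^ (n.natAbs ^ 2) else 0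
  have hpartial (m : ℕ) : ∏ j ∈ range m, (1 - (q ^ 2) ^ (j + 1)) * (1 + q ^ (2 * j + 1)) ^ 2 =
      ∑' n, term m n := by
    rw [prod_range_eq_sum_thetaCoeff hq0, tsum_eq_sum fun n hn => if_neg hn]
    exact sum_congr rfl fun n hn => (if_pos hn).symm
  have hterm (n : ℤ) : Tendsto (fun m => term m n) atTop (𝓝 (q ^ (n.natAbs ^ 2))) := by
    have hlim := (tendsto_thetaCoeff hq2 n).mul_const (q ^ (n.natAbs ^ 2))
    rw [one_mul] at hlim
    refine hlim.congr' ?_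
    filter_upwards [eventually_ge_atTop n.natAbs] with m hm
    exact (if_pos (by rw [mem_Icc]; omega)).symm
  have hdom : ∀ m n, ‖term m n‖ ≤ Real.exp (1 / (1 - ‖q ^ 2‖)) ^ 2 * ‖q‖ ^ (n.natAbs ^ 2) := by
    intro m n
    simp only [term]
    split_ifs with hn
    · rw [norm_mul, norm_pow]
      exact mul_le_mul_of_nonneg_right (norm_thetaCoeff_le hq2 (by rw [mem_Icc] at hn; omega))
        (by positivity)
    · rw [norm_zero]; positivity
  have hsum := tendsto_tsum_of_dominated_convergence
    ((summable_pow_natAbs_sq (norm_nonneg q) hq).mul_left _) hterm (.of_forall hdom)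
  refine tendsto_nhds_unique ?_ (multipliable_theta_factor hq).hasProd.tendsto_prod_nat
  simpa only [hpartial] using hsum

theorem theta_product_formula (z : ℂ) (hz : 0 < z.im) :
    ∑' n : ℤ, Complex.exp (Real.pi * Complex.I * (n : ℂ) ^ 2 * z) =
      ∏' n : ℕ,
        (1 - Complex.exp (2 * Real.pi * Complex.I * ((n : ℂ) + 1) * z)) *
          (1 + Complex.exp (Real.pi * Complex.I * (2 * ((n : ℂ) + 1) - 1) * z)) ^ 2 := by
  set q := Complex.exp (Real.pi * Complex.I * z)
  have hpow (k : ℕ) : q ^ k = Complex.exp (k * (Real.pi * Complex.I * z)) :=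
    (Complex.exp_nat_mul _ k).symm
  have hq : ‖q‖ < 1 := by
    rw [Complex.norm_exp, Real.exp_lt_one_iff]
    simpa [Complex.mul_re] using mul_pos Real.pi_pos hz
  convert tsum_pow_natAbs_sq_eq_tprod (Complex.exp_ne_zero _) hq using 1
  · refine tsum_congr fun n => ?_
    have hsq : ((n.natAbs ^ 2 : ℕ) : ℂ) = (n : ℂ) ^ 2 := by
      rw [← Int.cast_natCast, Nat.cast_pow, Int.natAbs_sq, Int.cast_pow]
    rw [hpow, hsq]
    congr 1
    ring
  · refine tprod_congr fun n => ?_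
    rw [← pow_mul, hpow, hpow]
    push_cast
    congr 3
    · ring
    · congr 1
      ring
end

section
/- Let a > 0, b real, c real with D = 4ac - b² > 0 and p(x) = ax² + bx + c. Then ∫_{-∞}^∞ (log p(x))/p(x) dx = (4π/√D)·log(√(D/a)). -/
/-!
Completing the square and rescaling turns `p` into `k (1 + t²)` with `k = D / (4a)`, with Jacobian
`√D / (2a)`. The substitution `t = tan θ` then turns `log (k (1 + t²)) / (k (1 + t²)) dt` into
`(log k - 2 log cos θ) / k dθ` on `(-π/2, π/2)`, and `∫ log cos = -π log 2` over that interval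
is the classical log-sine integral.
-/

open Real MeasureTheory Set

theorem integral_log_cos_neg_pi_div_two_pi_div_two :
    ∫ θ in -(π / 2)..π / 2, log (cos θ) = -log 2 * π := by
  have h := intervalIntegral.integral_comp_add_right (fun θ => log (sin θ)) (π / 2)
    (a := -(π / 2)) (b := π / 2)
  simpa only [neg_add_cancel, add_halves, sin_add_pi_div_two, integral_log_sin_zero_pi] using h

theorem integral_eq_setIntegral_comp_tan {E : Type*} [NormedAddCommGroup E] [NormedSpace ℝ E]
    (g : ℝ → E) :
    ∫ x, g x = ∫ θ in Ioo (-(π / 2)) (π / 2), (cos θ ^ 2)⁻¹ • g (tan θ) := by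
  have hderiv : ∀ θ ∈ Ioo (-(π / 2)) (π / 2),
      HasDerivWithinAt tan (1 / cos θ ^ 2) (Ioo (-(π / 2)) (π / 2)) θ := fun θ hθ =>
    (hasDerivAt_tan (cos_pos_of_mem_Ioo hθ).ne').hasDerivWithinAt
  rw [← setIntegral_univ, ← image_tan_Ioo,
    integral_image_eq_integral_abs_deriv_smul measurableSet_Ioo hderiv injOn_tan g]
  simp only [one_div, abs_inv, abs_pow, sq_abs]

theorem integral_eq_smul_integral_comp_mul_add {E : Type*} [NormedAddCommGroup E]
    [NormedSpace ℝ E] (g : ℝ → E) {d : ℝ} (hd : 0 < d) (m : ℝ) :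
    ∫ x, g x = d • ∫ t, g (d * t + m) := by
  rw [Measure.integral_comp_mul_left (fun y => g (y + m)), integral_add_right_eq_self,
    abs_of_pos (inv_pos.2 hd), smul_inv_smul₀ hd.ne']

theorem integral_comp_quadratic {E : Type*} [NormedAddCommGroup E] [NormedSpace ℝ E]
    (g : ℝ → E) {a b c : ℝ} (ha : 0 < a) (hD : 0 < 4 * a * c - b ^ 2) :
    ∫ x, g (a * x ^ 2 + b * x + c) =
      (√(4 * a * c - b ^ 2) / (2 * a)) •
        ∫ t, g ((4 * a * c - b ^ 2) / (4 * a) * (1 + t ^ 2)) := by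
  rw [integral_eq_smul_integral_comp_mul_add _ (d := √(4 * a * c - b ^ 2) / (2 * a))
    (by positivity) (-(b / (2 * a)))]
  congr 2 with t
  congr 1
  have hsq := sq_sqrt hD.le
  generalize √(4 * a * c - b ^ 2) = s at hsq
  field_simp
  linear_combination 4 * t ^ 2 * hsq

theorem integral_log_mul_one_add_sq_div {k : ℝ} (hk : 0 < k) :
    ∫ t, log (k * (1 + t ^ 2)) / (k * (1 + t ^ 2)) = π * log (4 * k) / k := by
  have hpt : ∀ θ ∈ Ioo (-(π / 2)) (π / 2),
      (cos θ ^ 2)⁻¹ • (log (k * (1 + tan θ ^ 2)) / (k * (1 + tan θ ^ 2))) =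
        (log k - 2 * log (cos θ)) / k := by
    intro θ hθ
    have hcos := cos_pos_of_mem_Ioo hθ
    rw [← inv_inv (1 + tan θ ^ 2), inv_one_add_tan_sq hcos.ne', log_mul hk.ne' (by positivity),
      log_inv, log_pow, smul_eq_mul]
    field_simp
    push_cast
    ring
  have hlogcos : IntervalIntegrable (fun θ => 2 * log (cos θ)) volume (-(π / 2)) (π / 2) :=
    intervalIntegrable_log_cos.const_mul 2
  rw [integral_eq_setIntegral_comp_tan, setIntegral_congr_fun measurableSet_Ioo hpt,
    ← integral_Ioc_eq_integral_Ioo, ← intervalIntegral.integral_of_le (by linarith [pi_pos]),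
    intervalIntegral.integral_div, intervalIntegral.integral_sub intervalIntegrable_const hlogcos,
    intervalIntegral.integral_const_mul, integral_log_cos_neg_pi_div_two_pi_div_two,
    intervalIntegral.integral_const, log_mul (by norm_num) hk.ne',
    show (4 : ℝ) = 2 ^ 2 by norm_num, log_pow]
  simp only [smul_eq_mul]
  push_cast
  ring

theorem integral_log_quadratic_div_quadratic (a b c : ℝ) (ha : 0 < a)
    (hD : 0 < 4 * a * c - b ^ 2) :
    ∫ x : ℝ, Real.log (a * x ^ 2 + b * x + c) / (a * x ^ 2 + b * x + c) =
      4 * Real.pi / Real.sqrt (4 * a * c - b ^ 2) *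
        Real.log (Real.sqrt ((4 * a * c - b ^ 2) / a)) := by
  rw [integral_comp_quadratic (fun y => log y / y) ha hD,
    integral_log_mul_one_add_sq_div (by positivity), log_sqrt (by positivity), smul_eq_mul]
  have hsq := sq_sqrt hD.le
  have hs := sqrt_pos.2 hD
  generalize √(4 * a * c - b ^ 2) = s at hsq hs
  rw [← hsq]
  field_simp
end
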